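/- Let T : V → g be a relative Rota–Baxter operator of weight 0 for a representation ρ : g → End(V). Write D := g × Dual(V) with the semidirect bracket ⁅(x,α),(y,β)⁆ := (⁅x,y⁆, ρ*(x)β − ρ*(y)α), pair V × Dual(g) with D by ⟨(v,ξ),(y,β)⟩ := β(v) + ξ(y), and set r₊(v,ξ) := (Tv, −ξ∘T) ∈ D. Then for all (u,ξ),(v,η) ∈ V × Dual(g) and all (y,β) ∈ D: −⟨(v,η), ⁅r₊(u,ξ),(y,β)⁆⟩ + ⟨(u,ξ), ⁅r₊(v,η),(y,β)⁆⟩ = ⟨([u,v]_T, θ*(u)η − θ*(v)ξ), (y,β)⟩. In other words, the dual Lie bracket induced by the triangular r-matrix r_T = T − T^{21} on V ⊕ Dual(g) coincides with the semidirect product bracket of V_T ⋉_{θ*} Dual(g). -/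

import Mathlib

variable {K : Type*} [Field K] {g : Type*} [LieRing g] [LieAlgebra K g]
  {V : Type*} [AddCommGroup V] [Module K V]

attribute [local instance 100] LieRing.ofAssociativeRing

/-- `ρ*(x)α := −α ∘ ρ(x)` on `Dual V`. -/
def rhoStar (ρ : g →ₗ⁅K⁆ Module.End K V) (x : g) (α : Module.Dual K V) :
    Module.Dual K V :=
  -(α ∘ₗ (ρ x : V →ₗ[K] V))

/-- The semidirect bracket on `D = g × Dual V`:
`⁅(x,α),(y,β)⁆ = (⁅x,y⁆, ρ*(x)β − ρ*(y)α)`. -/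
def brD (ρ : g →ₗ⁅K⁆ Module.End K V) (a b : g × Module.Dual K V) :
    g × Module.Dual K V :=
  (⁅a.1, b.1⁆, rhoStar ρ a.1 b.2 - rhoStar ρ b.1 a.2)

/-- The pairing of `V × Dual g` with `D = g × Dual V`:
`⟨(v,ξ),(y,β)⟩ = β(v) + ξ(y)`. -/
def pairD (p : V × Module.Dual K g) (q : g × Module.Dual K V) : K :=
  q.2 p.1 + p.2 q.1

/-- `r₊(v,ξ) := (Tv, −ξ∘T) ∈ D`. -/
def rPlusT (T : V →ₗ[K] g) (p : V × Module.Dual K g) : g × Module.Dual K V :=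
  (T p.1, -(p.2 ∘ₗ T))

/-- `θ(u) ∈ End(g)`, `θ(u)x = ⁅Tu,x⁆ + T(ρ(x)u)`. -/
noncomputable def thetaMap (ρ : g →ₗ⁅K⁆ Module.End K V) (T : V →ₗ[K] g) (u : V) :
    g →ₗ[K] g :=
  (LieAlgebra.ad K g (T u) : g →ₗ[K] g) +
    T ∘ₗ ((ρ : g →ₗ[K] Module.End K V).flip u)

/-- `θ*(u)ξ := −ξ ∘ θ(u)`. -/
noncomputable def thetaStar (ρ : g →ₗ⁅K⁆ Module.End K V) (T : V →ₗ[K] g) (u : V)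
    (ξ : Module.Dual K g) : Module.Dual K g :=
  -(ξ ∘ₗ thetaMap ρ T u)

/-- For a relative Rota–Baxter operator `T : V → g` of weight 0, the dual
Lie bracket induced by the triangular `r`-matrix `r_T = T − T^{21}` on `V ⊕ Dual g`
coincides with the semidirect product bracket of `V_T ⋉_{θ*} Dual g`: for all
`(u,ξ), (v,η) ∈ V × Dual g` and `(y,β) ∈ D`,
`−⟨(v,η), ⁅r₊(u,ξ),(y,β)⁆⟩ + ⟨(u,ξ), ⁅r₊(v,η),(y,β)⁆⟩
  = ⟨([u,v]_T, θ*(u)η − θ*(v)ξ), (y,β)⟩`. -/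
theorem stmt12 (ρ : g →ₗ⁅K⁆ Module.End K V) (T : V →ₗ[K] g)
    (hT : ∀ u v : V, T (ρ (T u) v - ρ (T v) u) = ⁅T u, T v⁆) :
    ∀ (u v : V) (ξ η : Module.Dual K g) (y : g) (β : Module.Dual K V),
      -(pairD (v, η) (brD ρ (rPlusT T (u, ξ)) (y, β))) +
        pairD (u, ξ) (brD ρ (rPlusT T (v, η)) (y, β)) =
      pairD (ρ (T u) v - ρ (T v) u, thetaStar ρ T u η - thetaStar ρ T v ξ) (y, β) := by
  intro u v ξ η y β
  simp only [pairD, brD, rPlusT, thetaStar, thetaMap, rhoStar, LinearMap.neg_apply,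
    LinearMap.sub_apply, LinearMap.add_apply, LinearMap.comp_apply, LinearMap.coe_comp,
    Function.comp_apply, map_sub, LieAlgebra.ad_apply, LinearMap.flip_apply,
    LieHom.coe_toLinearMap]
  simp only [map_add]; ring
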